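/- For a > 0, b < 0 and c > 0, ∫_0^∞ x^{a/2−1} e^{bx/2}/(x+c) dx = c^{a/2−1} e^{−bc/2} Γ(a/2) Γ(1−a/2, −bc/2), where Γ(·) is the gamma function and Γ(·,·) the upper incomplete gamma function. -/

import Mathlib

open Real Set

/-- Upper incomplete gamma function `Γ(α, y) = ∫_y^∞ e^{−t} t^{α−1} dt`. -/
noncomputable def uiGamma (α y : ℝ) : ℝ := ∫ t in Set.Ioi y, Real.exp (-t) * t ^ (α - 1)

/-- Density of the Gamma(a/2, −b/2) distribution at `x`. -/
noncomputable def gDens (a b x : ℝ) : ℝ :=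
  (Real.Gamma (a / 2))⁻¹ * (-b / 2) ^ (a / 2) * x ^ (a / 2 - 1) * Real.exp (b * x / 2)

/-- `ψ_c = (−bc/2)^{a/2} e^{−bc/2} Γ(1−a/2, −bc/2)`. -/
noncomputable def psi (a b c : ℝ) : ℝ :=
  (-(b * c) / 2) ^ (a / 2) * Real.exp (-(b * c) / 2) * uiGamma (1 - a / 2) (-(b * c) / 2)

/-!
Write `1 / (x + c) = ∫₀^∞ e^{-(x+c)t} dt` and exchange the order of integration (Fubini).
The inner `x`-integral is a Gamma integral, `∫₀^∞ x^{s-1} e^{-(p+t)x} dx = Γ(s) (t+p)^{-s}`,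
and the substitution `u = c (t + p)` turns the remaining `t`-integral
`∫₀^∞ e^{-ct} (t+p)^{-s} dt` into `c^{s-1} e^{cp} Γ(1-s, cp)`. Here `s = a/2` and `p = -b/2`.
-/

open MeasureTheory

lemma integral_comp_add_right_Ioi {E : Type*} [NormedAddCommGroup E] [NormedSpace ℝ E]
    (g : ℝ → E) (a d : ℝ) :
    ∫ x in Ioi a, g (x + d) = ∫ x in Ioi (a + d), g x := by
  simpa using (measurePreserving_add_right volume d).setIntegral_preimage_emb
    (measurableEmbedding_addRight d) g (Ioi (a + d))

lemma integral_exp_neg_mul_Ioi_zero {k : ℝ} (hk : 0 < k) :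
    ∫ t in Ioi 0, exp (-k * t) = k⁻¹ := by
  simpa using integral_exp_mul_Ioi (neg_neg_of_pos hk) 0

lemma integrable_mul_exp_neg_add_mul_prod {f : ℝ → ℝ} {c : ℝ} (hc : 0 < c)
    (hf : IntegrableOn f (Ioi 0)) :
    Integrable (fun z : ℝ × ℝ => f z.1 * exp (-(z.1 + c) * z.2))
      ((volume.restrict (Ioi 0)).prod (volume.restrict (Ioi 0))) := by
  have hmeas : AEStronglyMeasurable (fun z : ℝ × ℝ => f z.1 * exp (-(z.1 + c) * z.2))
      ((volume.restrict (Ioi 0)).prod (volume.restrict (Ioi 0))) :=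
    hf.aestronglyMeasurable.comp_fst.mul (by fun_prop : Continuous _).aestronglyMeasurable
  refine (integrable_prod_iff hmeas).2 ⟨?_, ?_⟩
  · filter_upwards [ae_restrict_mem measurableSet_Ioi] with x hx
    exact (exp_neg_integrableOn_Ioi 0 (add_pos hx hc)).const_mul (f x)
  · refine (hf.norm.mul_const c⁻¹).mono' hmeas.norm.integral_prod_right' ?_
    filter_upwards [ae_restrict_mem measurableSet_Ioi] with x hx
    have hxc : 0 < x + c := add_pos hx hc
    simp_rw [norm_mul, norm_of_nonneg (exp_nonneg _)]
    rw [integral_const_mul, integral_exp_neg_mul_Ioi_zero hxc,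
      norm_of_nonneg (mul_nonneg (norm_nonneg _) (inv_nonneg.2 hxc.le))]
    gcongr
    exact le_add_of_nonneg_left hx.out.le

theorem integral_div_add_eq_integral_exp_mul_integral {f : ℝ → ℝ} {c : ℝ} (hc : 0 < c)
    (hf : IntegrableOn f (Ioi 0)) :
    ∫ x in Ioi 0, f x / (x + c)
      = ∫ t in Ioi 0, exp (-c * t) * ∫ x in Ioi 0, f x * exp (-t * x) :=
  calc ∫ x in Ioi 0, f x / (x + c)
      = ∫ x in Ioi 0, ∫ t in Ioi 0, f x * exp (-(x + c) * t) := by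
        refine setIntegral_congr_fun measurableSet_Ioi fun x hx => ?_
        rw [integral_const_mul, integral_exp_neg_mul_Ioi_zero (add_pos hx hc), div_eq_mul_inv]
    _ = ∫ t in Ioi 0, ∫ x in Ioi 0, f x * exp (-(x + c) * t) :=
        integral_integral_swap (integrable_mul_exp_neg_add_mul_prod hc hf)
    _ = ∫ t in Ioi 0, exp (-c * t) * ∫ x in Ioi 0, f x * exp (-t * x) := by
        congr 1 with t
        rw [← integral_const_mul]
        congr 1 with x
        rw [mul_left_comm, ← exp_add]
        ring_nf

lemma uiGamma_one_sub_mul_eq_integral {c p s : ℝ} (hc : 0 < c) (hp : 0 ≤ p) :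
    uiGamma (1 - s) (c * p)
      = c ^ (1 - s) * exp (-(c * p)) * ∫ t in Ioi 0, exp (-(c * t)) * (t + p) ^ (-s) :=
  calc uiGamma (1 - s) (c * p)
      = ∫ u in Ioi 0, exp (-(u + c * p)) * (u + c * p) ^ (-s) := by
        rw [uiGamma, ← zero_add (c * p), ← integral_comp_add_right_Ioi, zero_add]
        simp only [sub_sub_cancel_left]
    _ = c * ∫ t in Ioi 0, exp (-(c * t + c * p)) * (c * t + c * p) ^ (-s) := by
        simpa using (integral_comp_mul_left_Ioi'
          (fun u => exp (-(u + c * p)) * (u + c * p) ^ (-s)) 0 hc).symm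
    _ = c * ∫ t in Ioi 0, c ^ (-s) * exp (-(c * p)) * (exp (-(c * t)) * (t + p) ^ (-s)) := by
        congr 1
        refine setIntegral_congr_fun measurableSet_Ioi fun t ht => ?_
        rw [← mul_add, mul_rpow hc.le (add_nonneg ht.out.le hp), mul_add, neg_add, exp_add]
        ring
    _ = c ^ (1 - s) * exp (-(c * p)) * ∫ t in Ioi 0, exp (-(c * t)) * (t + p) ^ (-s) := by
        rw [integral_const_mul, rpow_sub hc, rpow_one, rpow_neg hc.le]
        ring

lemma integral_rpow_mul_exp_neg_mul_mul_exp_neg_mul {s p t : ℝ} (hs : 0 < s) (hpt : 0 < t + p) :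
    ∫ x in Ioi 0, x ^ (s - 1) * exp (-(p * x)) * exp (-t * x) = Gamma s * (t + p) ^ (-s) :=
  calc ∫ x in Ioi 0, x ^ (s - 1) * exp (-(p * x)) * exp (-t * x)
      = ∫ x in Ioi 0, x ^ (s - 1) * exp (-((t + p) * x)) := by
        congr 1 with x
        rw [mul_assoc, ← exp_add]
        ring_nf
    _ = Gamma s * (t + p) ^ (-s) := by
        rw [integral_rpow_mul_exp_neg_mul_Ioi hs hpt, one_div, inv_rpow hpt.le, rpow_neg hpt.le,
          mul_comm]

theorem integral_rpow_mul_exp_neg_mul_div_add {s p c : ℝ} (hs : 0 < s) (hp : 0 < p) (hc : 0 < c) :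
    ∫ x in Ioi 0, x ^ (s - 1) * exp (-(p * x)) / (x + c)
      = c ^ (s - 1) * exp (c * p) * Gamma s * uiGamma (1 - s) (c * p) := by
  have hf : IntegrableOn (fun x => x ^ (s - 1) * exp (-(p * x))) (Ioi 0) := by
    simpa using integrableOn_rpow_mul_exp_neg_mul_rpow (by linarith) one_pos hp
  rw [integral_div_add_eq_integral_exp_mul_integral hc hf, uiGamma_one_sub_mul_eq_integral hc hp.le,
    setIntegral_congr_fun measurableSet_Ioi fun t ht => by
      rw [integral_rpow_mul_exp_neg_mul_mul_exp_neg_mul hs (add_pos ht hp)]]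
  simp_rw [neg_mul c, mul_left_comm _ (Gamma s)]
  rw [integral_const_mul]
  have hcancel : c ^ (s - 1) * c ^ (1 - s) * (exp (c * p) * exp (-(c * p))) = 1 := by
    rw [← rpow_add hc, ← exp_add]
    simp
  linear_combination (-(Gamma s * ∫ t in Ioi 0, exp (-(c * t)) * (t + p) ^ (-s))) * hcancel

theorem stieltjes_transform_gamma (a b c : ℝ) (ha : 0 < a) (hb : b < 0) (hc : 0 < c) :
    (∫ x in Set.Ioi (0 : ℝ), x ^ (a / 2 - 1) * Real.exp (b * x / 2) / (x + c))
      = c ^ (a / 2 - 1) * Real.exp (-(b * c) / 2) * Real.Gamma (a / 2)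
        * uiGamma (1 - a / 2) (-(b * c) / 2) := by
  have h := integral_rpow_mul_exp_neg_mul_div_add (s := a / 2) (p := -b / 2) (by linarith)
    (by linarith) hc
  rw [show c * (-b / 2) = -(b * c) / 2 by ring] at h
  simpa [show ∀ x, -(-b / 2 * x) = b * x / 2 from fun x => by ring] using h
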